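/- For a geometrically uniform state set with linearly independent states, the reciprocal states are also geometrically uniform with the same generating group: for every g ∈ G, the column of Φ̃ = Φ(ΦᴴΦ)⁻¹ indexed by g equals ρ(g)·φ̃, where φ̃ is the column of Φ̃ indexed by the identity element of G. -/

import Mathlib

/-!
Left translation by `g` permutes the states: `ρ(g) Φ` is `Φ` with its columns reindexed by
`b ↦ g b`. Since `ρ(g)` is unitary, the Gram matrix `ΦᴴΦ` is invariant under this
reindexing, hence so is its inverse (inverting commutes with conjugation by a permutation
matrix), and therefore `ρ(g) Φ̃` is `Φ̃` with its columns reindexed by `b ↦ g b`.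
Reading off column `1` gives the claim.
-/

open Matrix BigOperators ComplexOrder

noncomputable section

/-- The matrix whose column indexed by `g` is the state `ρ(g) φ`. -/
def guMatrix {G : Type*} [Group G] [Fintype G] (n : ℕ)
    (ρ : G →* Matrix.unitaryGroup (Fin n) ℂ) (φ : Fin n → ℂ) :
    Matrix (Fin n) G ℂ :=
  Matrix.of fun j g => ((ρ g : Matrix (Fin n) (Fin n) ℂ).mulVec φ) j

namespace Matrix

variable {m ι R : Type*} [Fintype m]

def reciprocal [Fintype ι] [DecidableEq ι] [CommRing R] [StarRing R] (M : Matrix m ι R) :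
    Matrix m ι R :=
  M * (Mᴴ * M)⁻¹

theorem conjTranspose_mul_self_submatrix [NonUnitalNonAssocSemiring R] [Star R]
    (M : Matrix m ι R) (σ : ι ≃ ι) :
    (M.submatrix id σ)ᴴ * M.submatrix id σ = (Mᴴ * M).submatrix σ σ := by
  rw [conjTranspose_submatrix, ← submatrix_mul _ _ _ _ _ Function.bijective_id]

theorem conjTranspose_mul_self_eq_submatrix [DecidableEq m] [Semiring R] [StarRing R]
    {U : Matrix m m R} (hU : Uᴴ * U = 1) {M : Matrix m ι R} {σ : ι ≃ ι}
    (hM : U * M = M.submatrix id σ) :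
    Mᴴ * M = (Mᴴ * M).submatrix σ σ := by
  rw [← conjTranspose_mul_self_submatrix, ← hM, conjTranspose_mul, Matrix.mul_assoc,
    ← Matrix.mul_assoc Uᴴ, hU, Matrix.one_mul]

theorem mul_reciprocal_eq_submatrix [DecidableEq m] [Fintype ι] [DecidableEq ι] [CommRing R]
    [StarRing R] {U : Matrix m m R} (hU : Uᴴ * U = 1) {M : Matrix m ι R} {σ : ι ≃ ι}
    (hM : U * M = M.submatrix id σ) :
    U * M.reciprocal = M.reciprocal.submatrix id σ := by
  have hinv : (Mᴴ * M)⁻¹ = (Mᴴ * M)⁻¹.submatrix σ σ := by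
    conv_lhs => rw [conjTranspose_mul_self_eq_submatrix hU hM, inv_submatrix_equiv]
  calc U * M.reciprocal = M.submatrix id σ * (Mᴴ * M)⁻¹.submatrix σ σ := by
        rw [reciprocal, ← Matrix.mul_assoc, hM, ← hinv]
    _ = M.reciprocal.submatrix id σ := submatrix_mul_equiv ..

end Matrix

theorem mul_guMatrix {G : Type*} [Group G] [Fintype G] (n : ℕ)
    (ρ : G →* Matrix.unitaryGroup (Fin n) ℂ) (φ : Fin n → ℂ) (g : G) :
    (ρ g : Matrix (Fin n) (Fin n) ℂ) * guMatrix n ρ φ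
      = (guMatrix n ρ φ).submatrix id (Equiv.mulLeft g) := by
  ext j b
  simp only [guMatrix, Matrix.mul_apply, of_apply, submatrix_apply, id_eq, Equiv.coe_mulLeft,
    map_mul, Submonoid.coe_mul, ← mulVec_mulVec]
  rfl

theorem stmt_14_general {G : Type*} [Group G] [Fintype G] [DecidableEq G] (n : ℕ)
    (ρ : G →* Matrix.unitaryGroup (Fin n) ℂ) (φ : Fin n → ℂ) :
    ∀ g : G,
      (fun j : Fin n =>
          (guMatrix n ρ φ * ((guMatrix n ρ φ)ᴴ * guMatrix n ρ φ)⁻¹) j g) =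
        (ρ g : Matrix (Fin n) (Fin n) ℂ).mulVec
          (fun j : Fin n =>
            (guMatrix n ρ φ * ((guMatrix n ρ φ)ᴴ * guMatrix n ρ φ)⁻¹) j (1 : G)) := by
  intro g
  have h := mul_reciprocal_eq_submatrix (ρ g).prop.1 (mul_guMatrix n ρ φ g)
  funext j
  have hcol := congrFun (congrFun h j) 1
  simp only [reciprocal, submatrix_apply, id_eq, Equiv.coe_mulLeft, mul_one] at hcol
  exact hcol.symm

theorem stmt_14 {G : Type*} [Group G] [Fintype G] [DecidableEq G] (n : ℕ)
    (ρ : G →* Matrix.unitaryGroup (Fin n) ℂ) (φ : Fin n → ℂ)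
    (hind : LinearIndependent ℂ (fun g : G => (ρ g : Matrix (Fin n) (Fin n) ℂ).mulVec φ)) :
    ∀ g : G,
      (fun j : Fin n =>
          (guMatrix n ρ φ * ((guMatrix n ρ φ)ᴴ * guMatrix n ρ φ)⁻¹) j g) =
        (ρ g : Matrix (Fin n) (Fin n) ℂ).mulVec
          (fun j : Fin n =>
            (guMatrix n ρ φ * ((guMatrix n ρ φ)ᴴ * guMatrix n ρ φ)⁻¹) j (1 : G)) :=
  stmt_14_general n ρ φ
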